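/- arXiv:2501.02970 — 2 statements merged into one kernel-verified Lean document; each statement's English description precedes it below -/
import Mathlib

section
/- Let a, b : ℕ → ℝ be per-view reward sequences with a_i ≥ 0 and b_i ≥ 0 for all i, a_i + b_i ≤ M for all i and some constant M, and suppose there is a constant c > 0 such that Σ_{i<m} (a_i + b_i) ≥ c·m for every m ≥ 1. Then the transformed value decreases strictly at rate at least c: for all ρ1 ≤ ρ2, v_{ρ2} ≤ v_{ρ1} − (ρ2 − ρ1)·c, where v_ρ = liminf_{m→∞} (1/m) Σ_{i<m} ((1−ρ)·a_i − ρ·b_i). -/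
/-!
Write `u_ρ i = (1-ρ) a_i - ρ b_i`. Then `u_{ρ1} i - u_{ρ2} i = (ρ2-ρ1)(a_i + b_i)`, so by the growth
condition the Cesàro means of `u_{ρ2}` lie at least `(ρ2-ρ1) c` below those of `u_{ρ1}` for every
`m ≥ 1`. Since `a_i + b_i ≤ M`, all these means are bounded, and the liminf, being monotone and
commuting with subtraction of constants on bounded real sequences, inherits the gap.
-/

open Filter Finset

/-- The transformed value `v_ρ = liminf (1/m) Σ_{i<m} ((1-ρ)·a_i − ρ·b_i)`. -/
noncomputable def transformedValue (a b : ℕ → ℝ) (ρ : ℝ) : ℝ :=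
  liminf (fun m : ℕ =>
    (1 / (m : ℝ)) * ∑ i ∈ range m, ((1 - ρ) * a i - ρ * b i)) atTop

noncomputable def cesaroMean (f : ℕ → ℝ) (m : ℕ) : ℝ :=
  (1 / (m : ℝ)) * ∑ i ∈ range m, f i

lemma cesaroMean_sub (f g : ℕ → ℝ) (m : ℕ) :
    cesaroMean f m - cesaroMean g m = cesaroMean (fun i => f i - g i) m := by
  simp only [cesaroMean, sum_sub_distrib, mul_sub]

lemma cesaroMean_const_mul (r : ℝ) (f : ℕ → ℝ) (m : ℕ) :
    cesaroMean (fun i => r * f i) m = r * cesaroMean f m := by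
  simp only [cesaroMean, ← mul_sum]
  ring

lemma le_cesaroMean_of_mul_le_sum {f : ℕ → ℝ} {c : ℝ} {m : ℕ} (hm : 1 ≤ m)
    (h : c * m ≤ ∑ i ∈ range m, f i) : c ≤ cesaroMean f m := by
  have hm' : (0 : ℝ) < m := by exact_mod_cast hm
  rwa [cesaroMean, one_div_mul_eq_div, le_div_iff₀ hm']

lemma abs_cesaroMean_le {f : ℕ → ℝ} {K : ℝ} (hf : ∀ i, |f i| ≤ K) (m : ℕ) :
    |cesaroMean f m| ≤ K := by
  rcases Nat.eq_zero_or_pos m with rfl | hm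
  · simpa [cesaroMean] using (abs_nonneg _).trans (hf 0)
  have hm' : (0 : ℝ) < m := by exact_mod_cast hm
  have hsum : |∑ i ∈ range m, f i| ≤ m * K := by
    simpa using (abs_sum_le_sum_abs f (range m)).trans (sum_le_sum fun i _ => hf i)
  rw [cesaroMean, abs_mul, abs_of_pos (one_div_pos.mpr hm'), one_div_mul_eq_div, div_le_iff₀ hm']
  linarith

lemma isBoundedUnder_abs_cesaroMean {f : ℕ → ℝ} {K : ℝ} (hf : ∀ i, |f i| ≤ K) :
    IsBoundedUnder (· ≤ ·) atTop (fun m => |cesaroMean f m|) :=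
  isBoundedUnder_of ⟨K, abs_cesaroMean_le hf⟩

lemma abs_sub_mul_le_of_add_le {x y M : ℝ} (hx : 0 ≤ x) (hy : 0 ≤ y) (hM : x + y ≤ M) (ρ : ℝ) :
    |(1 - ρ) * x - ρ * y| ≤ (|1 - ρ| + |ρ|) * M :=
  calc |(1 - ρ) * x - ρ * y| ≤ |1 - ρ| * x + |ρ| * y := by
        simpa [abs_mul, abs_of_nonneg hx, abs_of_nonneg hy] using abs_sub ((1 - ρ) * x) (ρ * y)
    _ ≤ |1 - ρ| * M + |ρ| * M := by
        gcongr <;> linarith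
    _ = (|1 - ρ| + |ρ|) * M := by ring

lemma liminf_le_liminf_sub_of_eventually_le {ι : Type*} {l : Filter ι} [l.NeBot] {u v : ι → ℝ}
    {d : ℝ} (hu : IsBoundedUnder (· ≤ ·) l fun i => |u i|)
    (hv : IsBoundedUnder (· ≤ ·) l fun i => |v i|) (h : ∀ᶠ i in l, v i ≤ u i - d) :
    liminf v l ≤ liminf u l - d := by
  obtain ⟨hu_le, hu_ge⟩ := isBoundedUnder_le_abs.mp hu
  have hud : IsCoboundedUnder (· ≥ ·) l fun i => u i - d := by
    obtain ⟨B, hB⟩ := hu_le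
    exact IsBoundedUnder.isCoboundedUnder_ge
      ⟨B - d, eventually_map.mpr <| (eventually_map.mp hB).mono fun i hi => sub_le_sub_right hi d⟩
  calc liminf v l ≤ liminf (fun i => u i - d) l :=
        liminf_le_liminf h (isBoundedUnder_le_abs.mp hv).2 hud
    _ = liminf u l - d := liminf_sub_const l u d hu_le.isCoboundedUnder_ge hu_ge

theorem transformedValue_strict_decrease_general
    (a b : ℕ → ℝ) (M c : ℝ)
    (ha : ∀ i, 0 ≤ a i) (hb : ∀ i, 0 ≤ b i)
    (hM : ∀ i, a i + b i ≤ M)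
    (hgrow : ∀ m : ℕ, 1 ≤ m → c * m ≤ ∑ i ∈ range m, (a i + b i)) :
    ∀ ρ1 ρ2 : ℝ, ρ1 ≤ ρ2 →
      transformedValue a b ρ2 ≤ transformedValue a b ρ1 - (ρ2 - ρ1) * c := by
  intro ρ1 ρ2 hρ
  set u : ℝ → ℕ → ℝ := fun ρ i => (1 - ρ) * a i - ρ * b i
  have hbdd (ρ : ℝ) : IsBoundedUnder (· ≤ ·) atTop fun m => |cesaroMean (u ρ) m| :=
    isBoundedUnder_abs_cesaroMean fun i => abs_sub_mul_le_of_add_le (ha i) (hb i) (hM i) ρ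
  have hgap : ∀ᶠ m in atTop, cesaroMean (u ρ2) m ≤ cesaroMean (u ρ1) m - (ρ2 - ρ1) * c := by
    filter_upwards [eventually_ge_atTop 1] with m hm
    have hdiff : cesaroMean (u ρ1) m - cesaroMean (u ρ2) m
        = (ρ2 - ρ1) * cesaroMean (fun i => a i + b i) m := by
      rw [cesaroMean_sub, ← cesaroMean_const_mul]
      congr 1
      ext i
      ring
    have hmean := mul_le_mul_of_nonneg_left (le_cesaroMean_of_mul_le_sum hm (hgrow m hm))
      (sub_nonneg.mpr hρ)
    linarith
  exact liminf_le_liminf_sub_of_eventually_le (hbdd ρ1) (hbdd ρ2) hgap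

/-- Under a linear growth condition `Σ_{i<m} (a_i + b_i) ≥ c·m`, the transformed
value decreases strictly at rate at least `c`:
`v_{ρ2} ≤ v_{ρ1} − (ρ2 − ρ1)·c` whenever `ρ1 ≤ ρ2`. -/
theorem transformedValue_strict_decrease
    (a b : ℕ → ℝ) (M c : ℝ)
    (ha : ∀ i, 0 ≤ a i) (hb : ∀ i, 0 ≤ b i)
    (hM : ∀ i, a i + b i ≤ M) (hc : 0 < c)
    (hgrow : ∀ m : ℕ, 1 ≤ m → c * m ≤ ∑ i ∈ range m, (a i + b i)) :
    ∀ ρ1 ρ2 : ℝ, ρ1 ≤ ρ2 →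
      transformedValue a b ρ2 ≤ transformedValue a b ρ1 - (ρ2 - ρ1) * c :=
  transformedValue_strict_decrease_general a b M c ha hb hM hgrow
end

section
/- Let (Ω, 𝓕, μ) be a probability space, let α ∈ [0,1) and let X : ℕ → Ω → ℝ be an i.i.d. sequence of Bernoulli random variables with P(X_i = 1) = 1 − α and P(X_i = 0) = α (X_i = 1 indicating that the leader of view i is honest). Let a : ℕ → Ω → ℝ be any sequence of random variables (the number of adversarial blocks committed in view i) satisfying 0 ≤ a_i(ω) ≤ 1 − X_i(ω) for all i and ω. If every honest block is committed (the honest committed reward in view i equals X_i), then for μ-almost every ω, liminf_{m→∞} (Σ_{i<m} X_i(ω)) / (Σ_{i<m} X_i(ω) + Σ_{i<m} a_i(ω)) ≥ 1 − α. (This is the content of Corollary 1: optimal censorship resilience — every honest block is committed regardless of the adversary's strategy — implies the chain quality is at least the optimal value 1 − α.) -/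
open Filter Finset MeasureTheory ProbabilityTheory

/-- Optimal censorship resilience implies optimal chain quality: if in each
view an honest leader is elected with probability `1 − α` (indicator
`X i = 1`), independently across views, every honest block is committed (the
honest committed reward in view `i` is `X i`), and the adversary commits at
most `1 − X i` blocks in view `i`, then almost surely the chain quality is at
least `1 − α`. -/
theorem chain_quality_of_censorship_resilience
    {Ω : Type*} [MeasurableSpace Ω] (μ : Measure Ω) [IsProbabilityMeasure μ]
    (α : ℝ) (hα0 : 0 ≤ α) (hα1 : α < 1)
    (X : ℕ → Ω → ℝ)
    (hmeas : ∀ i, Measurable (X i))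
    (hindep : iIndepFun X μ)
    (hval : ∀ i, ∀ ω, X i ω = 0 ∨ X i ω = 1)
    (hone : ∀ i, μ {ω | X i ω = 1} = ENNReal.ofReal (1 - α))
    (hzero : ∀ i, μ {ω | X i ω = 0} = ENNReal.ofReal α)
    (a : ℕ → Ω → ℝ)
    (ha0 : ∀ i, ∀ ω, 0 ≤ a i ω)
    (ha1 : ∀ i, ∀ ω, a i ω ≤ 1 - X i ω) :
    ∀ᵐ ω ∂μ, (1 - α) ≤ liminf (fun m : ℕ =>
        (∑ i ∈ range m, X i ω) /
          ((∑ i ∈ range m, X i ω) + ∑ i ∈ range m, a i ω)) atTop := by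
  classical
  have h1α : (0:ℝ) < 1 - α := by linarith
  -- common distribution
  set ν : Measure ℝ := ENNReal.ofReal α • Measure.dirac 0 +
      ENNReal.ofReal (1 - α) • Measure.dirac 1 with hνdef
  have hmap : ∀ i, μ.map (X i) = ν := by
    intro i
    ext s hs
    rw [Measure.map_apply (hmeas i) hs]
    have hνs : ν s = (if (0:ℝ) ∈ s then ENNReal.ofReal α else 0) +
        (if (1:ℝ) ∈ s then ENNReal.ofReal (1 - α) else 0) := by
      simp [hνdef, Measure.dirac_apply' _ hs, Set.indicator_apply]
    by_cases h0 : (0:ℝ) ∈ s <;> by_cases h1 : (1:ℝ) ∈ s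
    · have : X i ⁻¹' s = Set.univ := by
        ext ω; rcases hval i ω with h | h <;> simp [Set.mem_preimage, h, h0, h1]
      rw [this, hνs, if_pos h0, if_pos h1, measure_univ,
        ← ENNReal.ofReal_add hα0 h1α.le]
      norm_num
    · have : X i ⁻¹' s = {ω | X i ω = 0} := by
        ext ω; rcases hval i ω with h | h <;>
          simp [Set.mem_preimage, h, h0, h1]
      rw [this, hνs, if_pos h0, if_neg h1, hzero i, add_zero]
    · have : X i ⁻¹' s = {ω | X i ω = 1} := by
        ext ω; rcases hval i ω with h | h <;>
          simp [Set.mem_preimage, h, h0, h1]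
      rw [this, hνs, if_neg h0, if_pos h1, hone i, zero_add]
    · have : X i ⁻¹' s = ∅ := by
        ext ω; rcases hval i ω with h | h <;>
          simp [Set.mem_preimage, h, h0, h1]
      rw [this, hνs, if_neg h0, if_neg h1]
      simp
  have hident : ∀ i, IdentDistrib (X i) (X 0) μ μ := fun i =>
    ⟨(hmeas i).aemeasurable, (hmeas 0).aemeasurable, by rw [hmap i, hmap 0]⟩
  have hset1 : MeasurableSet {ω | X 0 ω = 1} :=
    hmeas 0 (measurableSet_singleton 1)
  have hX0 : X 0 = Set.indicator {ω | X 0 ω = 1} (fun _ => (1:ℝ)) := by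
    funext ω
    rcases hval 0 ω with h | h <;> simp [Set.indicator_apply, h]
  have hint : Integrable (X 0) μ := by
    rw [hX0]
    exact (integrable_const (1:ℝ)).indicator hset1
  have hE : μ[X 0] = 1 - α := by
    rw [hX0, integral_indicator_const (1:ℝ) hset1, measureReal_def, hone 0, smul_eq_mul, mul_one,
      ENNReal.toReal_ofReal h1α.le]
  have hpind : Pairwise (Function.onFun (IndepFun · · μ) X) := fun i j hij =>
    hindep.indepFun hij
  have hslln := strong_law_ae_real X hint hpind hident
  rw [hE] at hslln
  filter_upwards [hslln] with ω htend
  set S : ℕ → ℝ := fun m => ∑ i ∈ range m, X i ω with hS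
  set A : ℕ → ℝ := fun m => ∑ i ∈ range m, a i ω with hA
  have hSnn : ∀ m, 0 ≤ S m := fun m =>
    Finset.sum_nonneg fun i _ => by rcases hval i ω with h | h <;> simp [h]
  have hAnn : ∀ m, 0 ≤ A m := fun m =>
    Finset.sum_nonneg fun i _ => ha0 i ω
  have hSA : ∀ m, S m + A m ≤ m := by
    intro m
    have : S m + A m = ∑ i ∈ range m, (X i ω + a i ω) := by
      rw [hS, hA, ← Finset.sum_add_distrib]
    rw [this]
    calc ∑ i ∈ range m, (X i ω + a i ω) ≤ ∑ i ∈ range m, (1:ℝ) :=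
          Finset.sum_le_sum fun i _ => by have := ha1 i ω; linarith
      _ = m := by simp
  -- eventually S m / m > 0, hence S m > 0
  have hev : ∀ᶠ m in atTop, S m / m ≤ S m / (S m + A m) := by
    have hpos : ∀ᶠ m : ℕ in atTop, 0 < S m / m :=
      htend.eventually (eventually_gt_nhds h1α)
    filter_upwards [hpos] with m hm
    have hSm : 0 < S m := by
      by_contra h
      have : S m = 0 := le_antisymm (not_lt.mp h) (hSnn m)
      rw [this] at hm; simp at hm
    have hSAm : 0 < S m + A m := lt_of_lt_of_le hSm (by have := hAnn m; linarith)
    exact div_le_div_of_nonneg_left (hSnn m) hSAm (hSA m)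
  have hliminf : liminf (fun m : ℕ => S m / m) atTop = 1 - α := htend.liminf_eq
  have hbdd : atTop.IsBoundedUnder (· ≥ ·) (fun m : ℕ => S m / m) :=
    htend.isBoundedUnder_ge
  have hcobdd : atTop.IsCoboundedUnder (· ≥ ·)
      (fun m : ℕ => S m / (S m + A m)) := by
    refine isCoboundedUnder_ge_of_le atTop (x := 1) fun m => ?_
    rcases eq_or_lt_of_le (le_of_eq (rfl : (0:ℝ) = 0) |>.trans
      (add_nonneg (hSnn m) (hAnn m))) with h | h
    · rw [← h]; simp
    · rw [div_le_one h]; have := hAnn m; linarith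
  calc (1 - α : ℝ) = liminf (fun m : ℕ => S m / m) atTop := hliminf.symm
    _ ≤ liminf (fun m : ℕ => S m / (S m + A m)) atTop :=
        liminf_le_liminf hev hbdd hcobdd
end
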